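/- arXiv:2603.11609 — 2 statements merged into one kernel-verified Lean document; each statement's English description precedes it below -/
import Mathlib

section
/- Let d ≥ 5 and let λ be a partition of d that is not equal to any of the four partitions (d), (1^d), (d−1,1), (2,1^{d−2}). Then |f(λ)| < d(d−3)/2. -/
/-!
Write `f(λ) = P - Q` with `P = ∑ C(λ_i, 2)` and `Q = ∑ C(λ'_j, 2)`, both nonnegative. Since
`C(·, 2)` is superadditive, `P ≤ C(a, 2) + C(d - a, 2)` for any part `a` of `λ`, and likewise
`Q ≤ C(ℓ, 2) + C(d - ℓ, 2)` for the first column `ℓ = λ'_1`, the number of parts, because the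
columns also sum to `d`. Excluding the four partitions puts some part `a`, and also `ℓ`, in
`[2, d - 2]`, where `C(m, 2) + C(d - m, 2) ≤ C(d - 2, 2) + 1` by convexity. Hence
`|f(λ)| ≤ C(d - 2, 2) + 1 = d(d - 3)/2 - (d - 4) < d(d - 3)/2`.
-/

/-- The value `f(λ) = ∑_i C(λ_i,2) − ∑_j C(λ'_j,2)` of the central character of `S(d)`
associated to `λ ⊢ d` on the class of transpositions; here `λ'_j = #{i : λ_i ≥ j}`
is the conjugate partition (its parts vanish for `j > d`, so summing `j` over
`1,…,d` suffices). -/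
def fTrans (d : ℕ) (lam : d.Partition) : ℤ :=
  (lam.parts.map (fun p => (p.choose 2 : ℤ))).sum -
    ∑ j ∈ Finset.Icc 1 d,
      ((Multiset.card (lam.parts.filter (fun p => j ≤ p))).choose 2 : ℤ)

/-- The one-part partition `(d)` of `d`. -/
def singlePart (d : ℕ) (hd : 1 ≤ d) : d.Partition :=
  ⟨{d}, by intro i hi; simp at hi; omega, by simp⟩

/-- The partition `(1^d)` of `d`. -/
def allOnes (d : ℕ) : d.Partition :=
  ⟨Multiset.replicate d 1, by
      intro i hi; have := Multiset.eq_of_mem_replicate hi; omega,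
    by simp⟩

/-- The partition `(d-1, 1)` of `d`. -/
def hook (d : ℕ) (hd : 2 ≤ d) : d.Partition :=
  ⟨(d - 1) ::ₘ {1}, by
      intro i hi
      rcases Multiset.mem_cons.mp hi with h | h
      · omega
      · simp at h; omega,
    by simp; omega⟩

/-- The partition `(2, 1^{d-2})` of `d`. -/
def twoOnes (d : ℕ) (hd : 2 ≤ d) : d.Partition :=
  ⟨2 ::ₘ Multiset.replicate (d - 2) 1, by
      intro i hi
      rcases Multiset.mem_cons.mp hi with h | h
      · omega
      · have := Multiset.eq_of_mem_replicate h; omega,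
    by simp [Multiset.sum_replicate]; omega⟩

namespace Nat

theorem choose_two_add (a b : ℕ) : (a + b).choose 2 = a.choose 2 + b.choose 2 + a * b := by
  qify
  simp only [Nat.cast_choose_two]
  push_cast
  ring

theorem choose_two_add_choose_two_sub_le {a n : ℕ} (ha : 2 ≤ a) (han : a + 2 ≤ n) :
    a.choose 2 + (n - a).choose 2 ≤ (n - 2).choose 2 + 1 := by
  obtain ⟨x, rfl⟩ := Nat.exists_eq_add_of_le' ha
  obtain ⟨y, rfl⟩ := Nat.exists_eq_add_of_le han
  rw [show x + 2 + 2 + y - (x + 2) = y + 2 by omega, show x + 2 + 2 + y - 2 = x + y + 2 by omega]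
  qify
  simp only [Nat.cast_choose_two]
  push_cast
  nlinarith [mul_nonneg x.cast_nonneg y.cast_nonneg (α := ℚ)]

end Nat

namespace Multiset

theorem sum_map_choose_two_le_choose_two_sum (s : Multiset ℕ) :
    (s.map (·.choose 2)).sum ≤ s.sum.choose 2 := by
  induction s using Multiset.induction with
  | empty => simp
  | cons a s ih =>
    rw [map_cons, sum_cons, sum_cons, Nat.choose_two_add]
    linarith [Nat.zero_le (a * s.sum)]

variable {s : Multiset ℕ}

theorem sum_map_choose_two_le_of_mem {a : ℕ} (ha : a ∈ s) :
    (s.map (·.choose 2)).sum ≤ a.choose 2 + (s.sum - a).choose 2 := by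
  obtain ⟨t, rfl⟩ := exists_cons_of_mem ha
  simpa using sum_map_choose_two_le_choose_two_sum t

theorem card_add_le_sum_add_one (hpos : ∀ p ∈ s, 0 < p) {a : ℕ} (ha : a ∈ s) :
    card s + a ≤ s.sum + 1 := by
  obtain ⟨t, rfl⟩ := exists_cons_of_mem ha
  have := card_nsmul_le_sum (a := 1) fun p hp => hpos p (mem_cons_of_mem (s := t) hp)
  simp only [smul_eq_mul, mul_one] at this
  simp only [card_cons, sum_cons]
  omega

theorem eq_replicate_one_of_sum_le_card (hpos : ∀ p ∈ s, 0 < p) (h : s.sum ≤ card s) :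
    s = replicate (card s) 1 :=
  eq_replicate_card.mpr fun p hp => by
    have := card_add_le_sum_add_one hpos hp
    have := hpos p hp
    omega

theorem sum_card_filter_le_eq_sum {n : ℕ} (hs : ∀ p ∈ s, p ≤ n) :
    ∑ j ∈ Finset.Icc 1 n, card (s.filter (j ≤ ·)) = s.sum := by
  induction s using Multiset.induction with
  | empty => simp
  | cons a s ih =>
    have ha : ∑ j ∈ Finset.Icc 1 n, card (({a} : Multiset ℕ).filter (j ≤ ·)) = a := by
      have : {j ∈ Finset.Icc 1 n | j ≤ a} = Finset.Icc 1 a := by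
        ext j
        have := hs a (mem_cons_self a s)
        simp only [Finset.mem_filter, Finset.mem_Icc]
        omega
      simp [filter_singleton, apply_ite, this]
    rw [← singleton_add]
    simp only [filter_add, card_add, Finset.sum_add_distrib, ha, sum_add, sum_singleton,
      ih fun p hp => hs p (mem_cons_of_mem hp)]

end Multiset

namespace Nat.Partition

open Multiset

variable {n : ℕ} (lam : n.Partition)

theorem card_parts_add_le_of_mem {a : ℕ} (ha : a ∈ lam.parts) : card lam.parts + a ≤ n + 1 := by
  simpa [lam.parts_sum] using card_add_le_sum_add_one (fun _ => lam.parts_pos) ha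

theorem eq_allOnes_of_le_card_parts (h : n ≤ card lam.parts) : lam = allOnes n := by
  have hrep := eq_replicate_one_of_sum_le_card (fun _ => lam.parts_pos) (lam.parts_sum.trans_le h)
  have hcard : card lam.parts = n := by
    simpa [← lam.parts_sum] using (congrArg sum hrep).symm
  exact Nat.Partition.ext (by rw [hrep, hcard]; rfl)

theorem exists_two_le_mem_parts (h : lam ≠ allOnes n) : ∃ a ∈ lam.parts, 2 ≤ a := by
  by_contra! hlt
  refine h (lam.eq_allOnes_of_le_card_parts ?_)
  simpa [lam.parts_sum] using
    sum_le_card_nsmul lam.parts 1 fun p hp => Nat.lt_succ_iff.mp (hlt p hp)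

theorem eq_singlePart_of_card_parts_eq_one (hn : 1 ≤ n) (h : card lam.parts = 1) :
    lam = singlePart n hn := by
  obtain ⟨x, hx⟩ := card_eq_one.mp h
  have hxn : x = n := by simpa [hx] using lam.parts_sum
  exact Nat.Partition.ext (by rw [hx, hxn]; rfl)

theorem eq_singlePart_of_mem (hn : 1 ≤ n) (h : n ∈ lam.parts) : lam = singlePart n hn := by
  have := lam.card_parts_add_le_of_mem h
  have := card_pos_iff_exists_mem.mpr ⟨n, h⟩
  exact lam.eq_singlePart_of_card_parts_eq_one hn (by omega)

theorem eq_hook_of_mem (hn : 2 ≤ n) (h : n - 1 ∈ lam.parts) : lam = hook n hn := by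
  obtain ⟨t, ht⟩ := exists_cons_of_mem h
  have hsum : t.sum = 1 := by have := lam.parts_sum; rw [ht, sum_cons] at this; omega
  have hrest : t = {1} :=
    partition_one_parts ⟨t, fun hp => lam.parts_pos (ht ▸ mem_cons_of_mem hp), hsum⟩
  exact Nat.Partition.ext (by rw [ht, hrest]; rfl)

theorem eq_twoOnes_of_card_parts (hn : 2 ≤ n) (h : card lam.parts = n - 1) :
    lam = twoOnes n hn := by
  have hne : lam ≠ allOnes n := by rintro rfl; simp [allOnes] at h; omega
  obtain ⟨a, ha, h2a⟩ := lam.exists_two_le_mem_parts hne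
  have ha2 : a = 2 := by have := lam.card_parts_add_le_of_mem ha; omega
  subst ha2
  obtain ⟨t, ht⟩ := exists_cons_of_mem ha
  have hpos : ∀ p ∈ t, 0 < p := fun p hp => lam.parts_pos (ht ▸ mem_cons_of_mem hp)
  have hsum : t.sum = n - 2 := by have := lam.parts_sum; rw [ht, sum_cons] at this; omega
  have hcard : card t = n - 2 := by rw [ht, card_cons] at h; omega
  have hrep := eq_replicate_one_of_sum_le_card hpos (by omega)
  rw [hcard] at hrep
  exact Nat.Partition.ext (by rw [ht, hrep]; rfl)

def conjPart (j : ℕ) : ℕ := card (lam.parts.filter (j ≤ ·))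

theorem conjPart_one : lam.conjPart 1 = card lam.parts :=
  congrArg card (filter_eq_self.mpr fun _ => lam.parts_pos)

theorem sum_conjPart : ∑ j ∈ Finset.Icc 1 n, lam.conjPart j = n :=
  (sum_card_filter_le_eq_sum fun _ => le_of_mem_parts).trans lam.parts_sum

theorem sum_map_choose_two_parts_le {a : ℕ} (ha : a ∈ lam.parts) :
    (lam.parts.map (·.choose 2)).sum ≤ a.choose 2 + (n - a).choose 2 := by
  simpa [lam.parts_sum] using sum_map_choose_two_le_of_mem ha

theorem sum_choose_two_conjPart_le (hn : 1 ≤ n) :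
    ∑ j ∈ Finset.Icc 1 n, (lam.conjPart j).choose 2 ≤
      (card lam.parts).choose 2 + (n - card lam.parts).choose 2 := by
  have hmem : card lam.parts ∈ (Finset.Icc 1 n).val.map lam.conjPart :=
    lam.conjPart_one ▸ mem_map_of_mem _ (by simpa using hn)
  have := sum_map_choose_two_le_of_mem hmem
  rwa [map_map, ← Finset.sum_eq_multiset_sum, ← Finset.sum_eq_multiset_sum, sum_conjPart] at this

end Nat.Partition

theorem fTrans_eq_sub (d : ℕ) (lam : d.Partition) :
    fTrans d lam = ((lam.parts.map (·.choose 2)).sum : ℕ) -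
      ((∑ j ∈ Finset.Icc 1 d, (lam.conjPart j).choose 2 : ℕ) : ℤ) := by
  simp [fTrans, Nat.Partition.conjPart, Multiset.map_map]

theorem Int.natCast_mul_sub_three_ediv_two {d : ℕ} (hd : 2 ≤ d) :
    (d : ℤ) * (d - 3) / 2 = ((d - 2).choose 2 : ℕ) + (d - 3) := by
  obtain ⟨m, rfl⟩ := Nat.exists_eq_add_of_le' hd
  refine Int.ediv_eq_of_eq_mul_left two_ne_zero ?_
  qify
  simp [Nat.cast_choose_two]
  ring

/-- For `d ≥ 5` and `λ ⊢ d` different from `(d)`, `(1^d)`, `(d-1,1)`, `(2,1^{d-2})`,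
we have `|f(λ)| < d(d-3)/2`. -/
theorem stmt_6 (d : ℕ) (hd : 5 ≤ d) (lam : d.Partition)
    (h1 : lam ≠ singlePart d (by omega))
    (h2 : lam ≠ allOnes d)
    (h3 : lam ≠ hook d (by omega))
    (h4 : lam ≠ twoOnes d (by omega)) :
    |fTrans d lam| < (d : ℤ) * ((d : ℤ) - 3) / 2 := by
  obtain ⟨a, ha, h2a⟩ := lam.exists_two_le_mem_parts h2
  have had : a + 2 ≤ d := by
    have hne : a ≠ d := by rintro rfl; exact h1 (lam.eq_singlePart_of_mem _ ha)
    have hne' : a ≠ d - 1 := by rintro rfl; exact h3 (lam.eq_hook_of_mem _ ha)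
    have := Nat.Partition.le_of_mem_parts ha
    omega
  have hb : 2 ≤ Multiset.card lam.parts ∧ Multiset.card lam.parts + 2 ≤ d := by
    have h0 : Multiset.card lam.parts ≠ 0 := Multiset.card_pos_iff_exists_mem.mpr ⟨a, ha⟩ |>.ne'
    have hne : Multiset.card lam.parts ≠ 1 :=
      fun h => h1 (lam.eq_singlePart_of_card_parts_eq_one _ h)
    have hne' : Multiset.card lam.parts ≠ d - 1 := fun h => h4 (lam.eq_twoOnes_of_card_parts _ h)
    have := lam.card_parts_add_le_of_mem ha
    omega
  have hP := (lam.sum_map_choose_two_parts_le ha).trans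
    (Nat.choose_two_add_choose_two_sub_le h2a had)
  have hQ := (lam.sum_choose_two_conjPart_le (by omega)).trans
    (Nat.choose_two_add_choose_two_sub_le hb.1 hb.2)
  rw [fTrans_eq_sub, Int.natCast_mul_sub_three_ediv_two (by omega), abs_sub_lt_iff]
  omega
end

section
/- Let d ≥ 2 and let λ be any partition of d. Then |f(λ)| ≤ C(d,2), with equality if and only if λ = (d) or λ = (1^d). -/
lemma choose2_add (a b : ℕ) : (a+b).choose 2 = a.choose 2 + b.choose 2 + a*b := by
  induction a with
  | zero => simp
  | succ n ih =>
    have h1 : (n+1+b).choose 2 = (n+b).choose 2 + (n+b) := by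
      rw [Nat.succ_add, Nat.choose_succ_succ]; simp [Nat.choose_one_right]; omega
    have h2 : (n+1).choose 2 = n.choose 2 + n := by
      rw [Nat.choose_succ_succ]; simp [Nat.choose_one_right]; omega
    have h3 : (n+1)*b = n*b + b := by ring
    rw [h1, h2, ih, h3]
    ring

lemma msum_choose2_le (s : Multiset ℕ) :
    (s.map (fun p => p.choose 2)).sum ≤ s.sum.choose 2 := by
  induction s using Multiset.induction with
  | empty => simp
  | cons a t ih =>
    simp only [Multiset.map_cons, Multiset.sum_cons, choose2_add]
    omega

lemma fsum_choose2_le {ι : Type*} (F : Finset ι) (g : ι → ℕ) :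
    ∑ j ∈ F, (g j).choose 2 ≤ (∑ j ∈ F, g j).choose 2 := by
  induction F using Finset.cons_induction with
  | empty => simp
  | cons a t ha ih =>
    rw [Finset.sum_cons, Finset.sum_cons, choose2_add]
    omega

lemma sum_card_filter (d : ℕ) (s : Multiset ℕ) (h : ∀ p ∈ s, p ≤ d) :
    ∑ j ∈ Finset.Icc 1 d, Multiset.card (s.filter (fun p => j ≤ p)) = s.sum := by
  induction s using Multiset.induction with
  | empty => simp
  | cons a t ih =>
    have ha : a ≤ d := h a (Multiset.mem_cons_self a t)
    have ht : ∀ p ∈ t, p ≤ d := fun p hp => h p (Multiset.mem_cons_of_mem hp)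
    simp only [Multiset.filter_cons, Multiset.card_add, Multiset.sum_cons,
      Finset.sum_add_distrib, ih ht]
    congr 1
    have : ∀ j : ℕ, Multiset.card (if j ≤ a then ({a} : Multiset ℕ) else 0)
        = if j ≤ a then 1 else 0 := by intro j; split <;> simp
    simp only [this, ← Finset.sum_filter]
    have : (Finset.Icc 1 d).filter (fun j => j ≤ a) = Finset.Icc 1 a := by
      ext j; simp; omega
    simp [this]

lemma cast_msum (s : Multiset ℕ) (g : ℕ → ℕ) :
    (s.map (fun p => (g p : ℤ))).sum = ((s.map g).sum : ℤ) := by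
  induction s using Multiset.induction with
  | empty => simp
  | cons a t ih => rw [Multiset.map_cons, Multiset.sum_cons, Multiset.map_cons, Multiset.sum_cons, ih]; push_cast; ring


lemma fTrans_singlePart (d : ℕ) (hd : 1 ≤ d) :
    fTrans d (singlePart d hd) = (d.choose 2 : ℤ) := by
  rw [fTrans]
  have hB : ∑ j ∈ Finset.Icc 1 d,
      ((Multiset.card (((singlePart d hd).parts).filter (fun p => j ≤ p))).choose 2 : ℤ) = 0 := by
    apply Finset.sum_eq_zero
    intro j hj
    obtain ⟨hj1, hj2⟩ := Finset.mem_Icc.mp hj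
    show ((Multiset.card (Multiset.filter (fun p => j ≤ p) {d})).choose 2 : ℤ) = 0
    rw [Multiset.filter_singleton, if_pos hj2]
    simp
  rw [hB, sub_zero]
  show ((Multiset.map (fun p => (p.choose 2 : ℤ)) {d}).sum) = _
  simp

lemma fTrans_allOnes (d : ℕ) (hd : 1 ≤ d) :
    fTrans d (allOnes d) = -(d.choose 2 : ℤ) := by
  rw [fTrans]
  have hA : (Multiset.map (fun p => (p.choose 2 : ℤ)) (allOnes d).parts).sum = 0 := by
    show (Multiset.map (fun p => (p.choose 2 : ℤ)) (Multiset.replicate d 1)).sum = 0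
    rw [Multiset.map_replicate, Multiset.sum_replicate]
    norm_num
  have hB : ∑ j ∈ Finset.Icc 1 d,
      ((Multiset.card (((allOnes d).parts).filter (fun p => j ≤ p))).choose 2 : ℤ)
      = (d.choose 2 : ℤ) := by
    rw [Finset.sum_eq_single_of_mem 1 (Finset.mem_Icc.mpr ⟨le_refl 1, hd⟩)]
    · show ((Multiset.card (Multiset.filter (fun p => 1 ≤ p) (Multiset.replicate d 1))).choose 2 : ℤ) = _
      rw [Multiset.filter_eq_self.mpr (fun x hx => by
        rw [Multiset.eq_of_mem_replicate hx])]
      rw [Multiset.card_replicate]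
    · intro j hj hj1
      obtain ⟨h1, h2⟩ := Finset.mem_Icc.mp hj
      show ((Multiset.card (Multiset.filter (fun p => j ≤ p) (Multiset.replicate d 1))).choose 2 : ℤ) = 0
      rw [Multiset.filter_eq_nil.mpr (fun x hx => by
        rw [Multiset.eq_of_mem_replicate hx]; omega)]
      simp
  rw [hA, hB, zero_sub]

/-- For `d ≥ 2` and any `λ ⊢ d`, `|f(λ)| ≤ C(d,2)`, with equality iff
`λ = (d)` or `λ = (1^d)`. -/
theorem stmt_7 (d : ℕ) (hd : 2 ≤ d) (lam : d.Partition) :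
    |fTrans d lam| ≤ (d.choose 2 : ℤ) ∧
    (|fTrans d lam| = (d.choose 2 : ℤ) ↔
      lam = singlePart d (by omega) ∨ lam = allOnes d) := by
  have hpos : ∀ p ∈ lam.parts, 1 ≤ p := fun p hp => lam.parts_pos hp
  have hsum : lam.parts.sum = d := lam.parts_sum
  have hle : ∀ p ∈ lam.parts, p ≤ d := by
    intro p hp
    calc p ≤ lam.parts.sum := Multiset.single_le_sum (fun x _ => Nat.zero_le x) p hp
    _ = d := hsum
  set A : ℕ := (lam.parts.map (fun p => p.choose 2)).sum with hA
  set B : ℕ := ∑ j ∈ Finset.Icc 1 d,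
      (Multiset.card (lam.parts.filter (fun p => j ≤ p))).choose 2 with hB
  have hf : fTrans d lam = (A : ℤ) - (B : ℤ) := by
    rw [fTrans, cast_msum, Nat.cast_sum]
  have hAle : A ≤ d.choose 2 := by
    have := msum_choose2_le lam.parts; rw [hsum] at this; exact this
  have hBle : B ≤ d.choose 2 := by
    have h1 := fsum_choose2_le (Finset.Icc 1 d)
      (fun j => Multiset.card (lam.parts.filter (fun p => j ≤ p)))
    rw [sum_card_filter d _ hle, hsum] at h1
    exact h1
  constructor
  · rw [hf, abs_le]
    constructor <;> omega
  constructor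
  · intro h
    rw [hf] at h
    rcases (abs_eq (by positivity : (0:ℤ) ≤ (d.choose 2 : ℤ))).mp h with h' | h'
    · -- B = 0, lam = (d)
      left
      have hB0 : B = 0 := by omega
      have hsum0 : ∑ j ∈ Finset.Icc 1 d,
          (Multiset.card (lam.parts.filter (fun p => j ≤ p))).choose 2 = 0 := by
        rw [← hB]; exact hB0
      have h1 := Finset.sum_eq_zero_iff.mp hsum0 1 (Finset.mem_Icc.mpr ⟨le_refl 1, by omega⟩)
      rw [Multiset.filter_eq_self.mpr hpos] at h1
      have hlt := Nat.choose_eq_zero_iff.mp h1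
      have hne : lam.parts ≠ 0 := by
        intro h0; rw [h0] at hsum; simp at hsum; omega
      have hcpos := Multiset.card_pos.mpr hne
      have hcard : Multiset.card lam.parts = 1 := by omega
      obtain ⟨a, ha⟩ := Multiset.card_eq_one.mp hcard
      have had : a = d := by rw [ha] at hsum; simpa using hsum
      ext1
      show lam.parts = ({d} : Multiset ℕ)
      rw [ha, had]
    · -- A = 0, lam = (1^d)
      right
      have hA0 : A = 0 := by omega
      have hall : ∀ p ∈ lam.parts, p = 1 := by
        intro p hp
        have h0 : (p.choose 2 : ℕ) = 0 :=
          Multiset.sum_eq_zero_iff.mp hA0 _ (Multiset.mem_map_of_mem _ hp)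
        have := Nat.choose_eq_zero_iff.mp h0
        have := hpos p hp
        omega
      have hrep := Multiset.eq_replicate_card.mpr hall
      have hcard : Multiset.card lam.parts = d := by
        rw [hrep] at hsum
        rw [Multiset.sum_replicate] at hsum
        simpa using hsum
      ext1
      show lam.parts = Multiset.replicate d 1
      rw [hrep, hcard]
  · intro h
    rcases h with h | h
    · rw [h, fTrans_singlePart]
      rw [abs_of_nonneg (by positivity)]
    · rw [h, fTrans_allOnes d (by omega)]
      rw [abs_neg, abs_of_nonneg (by positivity)]
end
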